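/- Let ℓ be an algebraically closed field, G a finite group acting on a commutative ℓ-algebra A by ℓ-algebra automorphisms, and let φ, ψ : A → ℓ be two ℓ-algebra homomorphisms. Then φ and ψ agree on the invariant subalgebra A^G if and only if there exists g ∈ G with ψ = φ ∘ g. -/
import Mathlib

theorem agree_on_invariants_iff_exists_group_element (ℓ A G : Type) [Field ℓ]
    [IsAlgClosed ℓ] [CommRing A] [Algebra ℓ A] [Group G] [Finite G]
    (ρ : G →* (A ≃ₐ[ℓ] A)) (φ ψ : A →ₐ[ℓ] ℓ) :
    (∀ a : A, (∀ g : G, ρ g a = a) → φ a = ψ a) ↔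
      ∃ g : G, ∀ a : A, ψ a = φ (ρ g a) := by
  cases nonempty_fintype G
  constructor
  · intro h
    by_contra hc
    push_neg at hc
    -- For each g, ker ψ is not contained in ker (φ ∘ ρ g)
    have hkey : ∀ g : G, ¬ (RingHom.ker ψ.toRingHom ≤
        RingHom.ker (φ.toRingHom.comp (ρ g : A ≃ₐ[ℓ] A).toRingEquiv.toRingHom)) := by
      intro g hle
      obtain ⟨a, ha⟩ := hc g
      have hb : ψ (a - algebraMap ℓ A (ψ a)) = 0 := by simp
      have hmem : a - algebraMap ℓ A (ψ a) ∈ RingHom.ker ψ.toRingHom := by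
        simp [RingHom.mem_ker, hb]
      have := hle hmem
      apply ha
      have : φ ((ρ g) (a - algebraMap ℓ A (ψ a))) = 0 := this
      rw [map_sub, map_sub] at this
      have halg : (ρ g) (algebraMap ℓ A (ψ a)) = algebraMap ℓ A (ψ a) :=
        AlgEquiv.commutes _ _
      rw [halg] at this
      simp at this
      exact (sub_eq_zero.mp this).symm
    -- prime avoidance
    have hprime : ∀ g : G,
        (RingHom.ker (φ.toRingHom.comp (ρ g : A ≃ₐ[ℓ] A).toRingEquiv.toRingHom)).IsPrime :=
      fun g => RingHom.ker_isPrime _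
    have g0 : G := 1
    have havoid : ¬ ((RingHom.ker ψ.toRingHom : Set A) ⊆
        ⋃ g ∈ ((Finset.univ : Finset G) : Set G),
          (RingHom.ker (φ.toRingHom.comp (ρ g : A ≃ₐ[ℓ] A).toRingEquiv.toRingHom) : Set A)) := by
      rw [Ideal.subset_union_prime g0 g0 (fun i _ _ _ => hprime i)]
      push_neg
      intro g _
      exact hkey g
    obtain ⟨a, haψ, haφ⟩ := by
      rw [Set.not_subset] at havoid
      exact havoid
    simp only [Set.mem_iUnion, not_exists, SetLike.mem_coe, RingHom.mem_ker,
      Finset.mem_univ, exists_prop, true_and, not_true] at haφ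
    have haφ' : ∀ g : G, φ ((ρ g) a) ≠ 0 := by
      intro g
      have := haφ g
      simpa [RingHom.mem_ker] using this
    have haψ' : ψ a = 0 := by simpa [RingHom.mem_ker] using haψ
    -- invariant element
    set x : A := ∏ g : G, ρ g a with hx
    have hinv : ∀ h' : G, ρ h' x = x := by
      intro h'
      rw [hx, map_prod]
      exact Fintype.prod_equiv (Equiv.mulLeft h') _ _ (fun g => by
        simp only [Equiv.coe_mulLeft, map_mul, AlgEquiv.mul_apply])
    have hψx : ψ x = 0 := by
      rw [hx, map_prod]
      refine Finset.prod_eq_zero (Finset.mem_univ 1) ?_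
      simp [haψ']
    have hφx : φ x ≠ 0 := by
      rw [hx, map_prod]
      exact Finset.prod_ne_zero_iff.mpr fun g _ => haφ' g
    exact hφx (by rw [h x hinv, hψx])
  · rintro ⟨g, hg⟩ a ha
    rw [hg a, ha g]
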